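/- arXiv:1911.03742 — 5 statements merged into one kernel-verified Lean document; each statement's English description precedes it below -/
import Mathlib

section
/- Let x ∈ M_n(ℂ) be positive semidefinite and let p be the orthogonal projection onto the range of x. Then the map y ↦ x^{1/2} · y · x^{1/2} is an order isomorphism from the order interval [0, p] = {y : 0 ≤ y ≤ p} onto the order interval [0, x] = {y : 0 ≤ y ≤ x}, where the order is the Loewner order. -/
open Matrix
open scoped ComplexOrder

/-- The positive semidefinite square root of a positive semidefinite matrix
(definition from the older Mathlib, removed since). -/
noncomputable def Matrix.PosSemidef.sqrt {n : Type*} [Fintype n] [DecidableEq n]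
    {A : Matrix n n ℂ} (hA : A.PosSemidef) : Matrix n n ℂ :=
  hA.1.eigenvectorUnitary.1 * diagonal ((↑) ∘ (√·) ∘ hA.1.eigenvalues) *
  (star hA.1.eigenvectorUnitary : Matrix n n ℂ)

lemma Matrix.PosSemidef.posSemidef_sqrt {n : Type*} [Fintype n] [DecidableEq n]
    {A : Matrix n n ℂ} (hA : A.PosSemidef) : hA.sqrt.PosSemidef := by
  have hD : (diagonal ((↑) ∘ (√·) ∘ hA.1.eigenvalues : n → ℂ)).PosSemidef :=
    posSemidef_diagonal_iff.mpr (fun i => Complex.zero_le_real.mpr (Real.sqrt_nonneg _))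
  exact hD.mul_mul_conjTranspose_same (hA.1.eigenvectorUnitary : Matrix n n ℂ)

lemma Matrix.PosSemidef.sqrt_mul_self {n : Type*} [Fintype n] [DecidableEq n]
    {A : Matrix n n ℂ} (hA : A.PosSemidef) : hA.sqrt * hA.sqrt = A := by
  have hU : star (hA.1.eigenvectorUnitary : Matrix n n ℂ) * hA.1.eigenvectorUnitary = 1 :=
    (Matrix.mem_unitaryGroup_iff').mp hA.1.eigenvectorUnitary.2
  conv_rhs => rw [hA.1.spectral_theorem, Unitary.conjStarAlgAut_apply]
  unfold Matrix.PosSemidef.sqrt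
  calc _ = (hA.1.eigenvectorUnitary : Matrix n n ℂ) *
        (diagonal ((↑) ∘ (√·) ∘ hA.1.eigenvalues) *
          (star (hA.1.eigenvectorUnitary : Matrix n n ℂ) *
            (hA.1.eigenvectorUnitary : Matrix n n ℂ)) *
          diagonal ((↑) ∘ (√·) ∘ hA.1.eigenvalues)) *
        star (hA.1.eigenvectorUnitary : Matrix n n ℂ) := by simp only [mul_assoc]
    _ = _ := by
      rw [hU, mul_one, diagonal_mul_diagonal]
      congr 3
      funext i
      simp only [Function.comp_apply]
      rw [← Complex.ofReal_mul, Real.mul_self_sqrt (hA.eigenvalues_nonneg i)]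
      rfl

private lemma eq_of_mulVec_eq {n : ℕ} {A B : Matrix (Fin n) (Fin n) ℂ}
    (h : ∀ v, A *ᵥ v = B *ᵥ v) : A = B := by
  ext i j
  have := congrFun (h (Pi.single j 1)) i
  simpa using this

/-- A hermitian matrix has a "pseudoinverse". -/
private lemma aux_pinv {n : ℕ} {A : Matrix (Fin n) (Fin n) ℂ} (hA : A.IsHermitian) :
    ∃ t : Matrix (Fin n) (Fin n) ℂ, tᴴ = t ∧ A * t = t * A ∧ A * t * A = A := by
  classical
  set U : Matrix (Fin n) (Fin n) ℂ := (hA.eigenvectorUnitary : Matrix (Fin n) (Fin n) ℂ) with hU_def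
  have hU : star U * U = 1 :=
    (Matrix.mem_unitaryGroup_iff').mp hA.eigenvectorUnitary.2
  set e := hA.eigenvalues with he_def
  set d : Fin n → ℂ := fun i => (e i : ℂ) with hd_def
  set f : Fin n → ℂ := fun i => if e i = 0 then 0 else (((e i)⁻¹ : ℝ) : ℂ) with hf_def
  have hspec : A = U * diagonal d * star U := hA.spectral_theorem
  have key : ∀ g h : Fin n → ℂ,
      (U * diagonal g * star U) * (U * diagonal h * star U)
        = U * diagonal (fun i => g i * h i) * star U := by
    intro g h
    calc (U * diagonal g * star U) * (U * diagonal h * star U)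
        = U * (diagonal g * ((star U * U) * (diagonal h * star U))) := by
          simp only [mul_assoc]
      _ = U * (diagonal g * diagonal h) * star U := by
          rw [hU, one_mul]; simp only [mul_assoc]
      _ = U * diagonal (fun i => g i * h i) * star U := by
          rw [diagonal_mul_diagonal]
  refine ⟨U * diagonal f * star U, ?_, ?_, ?_⟩
  · have hstarf : star f = f := by
      funext i
      by_cases h : e i = 0 <;> simp [hf_def, h, Complex.conj_ofReal]
    calc (U * diagonal f * star U)ᴴ
        = (star U)ᴴ * ((diagonal f)ᴴ * Uᴴ) := by
          simp only [conjTranspose_mul, mul_assoc]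
      _ = U * diagonal f * star U := by
          rw [diagonal_conjTranspose, hstarf, star_eq_conjTranspose,
            conjTranspose_conjTranspose, mul_assoc]
  · have h1 : (fun i => d i * f i) = fun i => f i * d i := funext fun i => mul_comm _ _
    rw [hspec, key, key, h1]
  · have h2 : (fun i => d i * f i * d i) = d := by
      funext i
      by_cases h : e i = 0
      · simp [hd_def, hf_def, h]
      · simp only [hd_def, hf_def, if_neg h]
        rw [← Complex.ofReal_mul, mul_inv_cancel₀ h, Complex.ofReal_one, one_mul]
    rw [hspec, key, key, h2, ← hspec]

private lemma psd_zero_of_neg {n : ℕ} {a : Matrix (Fin n) (Fin n) ℂ}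
    (ha : a.PosSemidef) (hb : (-a).PosSemidef) : a = 0 := by
  classical
  have hrr : ha.sqrt * ha.sqrt = a := ha.sqrt_mul_self
  have hrH : ha.sqrtᴴ = ha.sqrt := ha.posSemidef_sqrt.1
  have hzero : ha.sqrt = 0 := by
    apply eq_of_mulVec_eq; intro v
    have h2 : star v ⬝ᵥ a *ᵥ v ≤ 0 := by
      have h3 := hb.dotProduct_mulVec_nonneg v
      rw [neg_mulVec, dotProduct_neg] at h3
      exact neg_nonneg.mp h3
    have h1 : star v ⬝ᵥ a *ᵥ v = 0 := le_antisymm h2 (ha.dotProduct_mulVec_nonneg v)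
    have h4 : star (ha.sqrt *ᵥ v) ⬝ᵥ (ha.sqrt *ᵥ v) = 0 := by
      rw [star_mulVec, hrH, ← dotProduct_mulVec, mulVec_mulVec, hrr]
      exact h1
    rw [dotProduct_star_self_eq_zero.mp h4]
    simp
  rw [← hrr, hzero, mul_zero]


private lemma mul_q_eq_zero {n : ℕ} {w z q : Matrix (Fin n) (Fin n) ℂ}
    (hz : z.PosSemidef) (hwz : (w - z).PosSemidef) (hq : qᴴ = q)
    (hwq : q * w * q = 0) : z * q = 0 := by
  have h1 : (q * z * q).PosSemidef := by
    have := hz.mul_mul_conjTranspose_same q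
    rwa [hq] at this
  have h2 : (-(q * z * q)).PosSemidef := by
    have h3 := hwz.mul_mul_conjTranspose_same q
    rw [hq] at h3
    have e : q * (w - z) * q = -(q * z * q) := by
      rw [mul_sub, sub_mul, hwq, zero_sub]
    rwa [e] at h3
  have h0 : q * z * q = 0 := psd_zero_of_neg h1 h2
  have hrr : hz.sqrt * hz.sqrt = z := hz.sqrt_mul_self
  have hrH : hz.sqrtᴴ = hz.sqrt := hz.posSemidef_sqrt.1
  have h4 : (hz.sqrt * q)ᴴ * (hz.sqrt * q) = 0 := by
    rw [conjTranspose_mul, hrH, hq]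
    calc q * hz.sqrt * (hz.sqrt * q) = q * (hz.sqrt * hz.sqrt) * q := by
          simp only [mul_assoc]
      _ = 0 := by rw [hrr, h0]
  have hrq : hz.sqrt * q = 0 := conjTranspose_mul_self_eq_zero.mp h4
  calc z * q = hz.sqrt * (hz.sqrt * q) := by rw [← mul_assoc, hrr]
    _ = 0 := by rw [hrq, mul_zero]

/-- For `x` positive semidefinite with range projection `p`, the map
`y ↦ x^{1/2} y x^{1/2}` is an order isomorphism from `[0, p]` onto `[0, x]`
(Loewner order). -/
theorem stmt_7 (n : ℕ) (x p : Matrix (Fin n) (Fin n) ℂ)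
    (hx : x.PosSemidef)
    (hp : p.IsHermitian) (hp2 : p * p = p)
    (hrange : LinearMap.range p.mulVecLin = LinearMap.range x.mulVecLin) :
    Set.BijOn (fun y => hx.sqrt * y * hx.sqrt)
      {y : Matrix (Fin n) (Fin n) ℂ | y.PosSemidef ∧ (p - y).PosSemidef}
      {y : Matrix (Fin n) (Fin n) ℂ | y.PosSemidef ∧ (x - y).PosSemidef} ∧
    ∀ y ∈ {y : Matrix (Fin n) (Fin n) ℂ | y.PosSemidef ∧ (p - y).PosSemidef},
      ∀ z ∈ {y : Matrix (Fin n) (Fin n) ℂ | y.PosSemidef ∧ (p - y).PosSemidef},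
        ((z - y).PosSemidef ↔
          (hx.sqrt * z * hx.sqrt - hx.sqrt * y * hx.sqrt).PosSemidef) := by
    classical
  set s := hx.sqrt with hs_def
  have hs : s.PosSemidef := hx.posSemidef_sqrt
  have hsH : sᴴ = s := hs.1
  have hss : s * s = x := hx.sqrt_mul_self
  obtain ⟨t, htH, hcomm, hsts⟩ := aux_pinv hs.1
  have hxt : x * t = s := by rw [← hss, mul_assoc, hcomm, ← mul_assoc, hsts]
  have hr1 : LinearMap.range x.mulVecLin = LinearMap.range s.mulVecLin := by
    apply le_antisymm
    · rw [← hss, mulVecLin_mul]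
      exact LinearMap.range_comp_le_range _ _
    · rw [← hxt, mulVecLin_mul]
      exact LinearMap.range_comp_le_range _ _
  have hrange' : LinearMap.range p.mulVecLin = LinearMap.range s.mulVecLin :=
    hrange.trans hr1
  have hps : p * s = s := by
    apply eq_of_mulVec_eq; intro v
    obtain ⟨u, hu⟩ : s *ᵥ v ∈ LinearMap.range p.mulVecLin := by
      rw [hrange']; exact ⟨v, by simp [mulVecLin_apply]⟩
    rw [mulVecLin_apply] at hu
    rw [← mulVec_mulVec, ← hu, mulVec_mulVec, hp2, hu]
  have hsp : s * p = s := by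
    have h := congrArg conjTranspose hps
    rwa [conjTranspose_mul, hsH, hp.eq] at h
  have hp0H : (s * t)ᴴ = s * t := by rw [conjTranspose_mul, htH, hsH, ← hcomm]
  have hpp0 : p * (s * t) = s * t := by rw [← mul_assoc, hps]
  have hp0p : (s * t) * p = p := by
    apply eq_of_mulVec_eq; intro v
    obtain ⟨u, hu⟩ : p *ᵥ v ∈ LinearMap.range s.mulVecLin := by
      rw [← hrange']; exact ⟨v, by simp [mulVecLin_apply]⟩
    rw [mulVecLin_apply] at hu
    rw [← mulVec_mulVec, ← hu, mulVec_mulVec, hsts, hu]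
  have hp0 : s * t = p := by
    have h1 : p * (s * t) = p := by
      have h := congrArg conjTranspose hp0p
      rwa [conjTranspose_mul, hp0H, hp.eq] at h
    rw [← hpp0, h1]
  have hts : t * s = p := by rw [← hcomm, hp0]
  have hxp : x * p = x := by rw [← hss, mul_assoc, hsp]
  have htxt : t * x * t = p := by
    rw [← hss, ← mul_assoc t s s, mul_assoc (t * s) s t, hts, hp0, hp2]
  have hqH : (1 - p)ᴴ = 1 - p := by rw [conjTranspose_sub, conjTranspose_one, hp.eq]
  -- invariance under p for elements dominated by p
  have inv_p : ∀ a : Matrix (Fin n) (Fin n) ℂ, a.PosSemidef → (p - a).PosSemidef →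
      p * a = a ∧ a * p = a := by
    intro a ha hpa
    have hq0 : (1 - p) * p * (1 - p) = 0 := by
      rw [sub_mul, one_mul, hp2, sub_self, zero_mul]
    have haq : a * (1 - p) = 0 := mul_q_eq_zero ha hpa hqH hq0
    rw [mul_sub, mul_one, sub_eq_zero] at haq
    have hap : a * p = a := haq.symm
    refine ⟨?_, hap⟩
    have h := congrArg conjTranspose hap
    rwa [conjTranspose_mul, hp.eq, ha.1.eq] at h
  have hpx : p * x = x := by
    have h := congrArg conjTranspose hxp
    rwa [conjTranspose_mul, hp.eq, hx.1.eq] at h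
  -- invariance under p for elements dominated by x
  have inv_x : ∀ a : Matrix (Fin n) (Fin n) ℂ, a.PosSemidef → (x - a).PosSemidef →
      p * a = a ∧ a * p = a := by
    intro a ha hxa
    have hq0 : (1 - p) * x * (1 - p) = 0 := by
      rw [sub_mul, one_mul, hpx, sub_self, zero_mul]
    have haq : a * (1 - p) = 0 := mul_q_eq_zero ha hxa hqH hq0
    rw [mul_sub, mul_one, sub_eq_zero] at haq
    have hap : a * p = a := haq.symm
    refine ⟨?_, hap⟩
    have h := congrArg conjTranspose hap
    rwa [conjTranspose_mul, hp.eq, ha.1.eq] at h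
  -- conjugating back with t
  have conj_back : ∀ a : Matrix (Fin n) (Fin n) ℂ, p * a = a → a * p = a →
      t * (s * a * s) * t = a := by
    intro a h1 h2
    calc t * (s * a * s) * t = (t * s) * a * (s * t) := by simp only [mul_assoc]
      _ = p * a * p := by rw [hts, hp0]
      _ = a := by rw [h1, h2]
  have conj_psd : ∀ a : Matrix (Fin n) (Fin n) ℂ, a.PosSemidef → (s * a * s).PosSemidef := by
    intro a ha
    have := ha.mul_mul_conjTranspose_same s
    rwa [hsH] at this
  have conj_psd_t : ∀ a : Matrix (Fin n) (Fin n) ℂ, a.PosSemidef → (t * a * t).PosSemidef := by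
    intro a ha
    have := ha.mul_mul_conjTranspose_same t
    rwa [htH] at this
  constructor
  · refine ⟨?_, ?_, ?_⟩
    · -- MapsTo
      rintro y ⟨hy1, hy2⟩
      refine ⟨conj_psd y hy1, ?_⟩
      have e : s * (p - y) * s = x - s * y * s := by
        rw [mul_sub, sub_mul, hsp, hss]
      have := conj_psd _ hy2
      rwa [e] at this
    · -- InjOn
      rintro y₁ ⟨hy1, hy2⟩ y₂ ⟨hz1, hz2⟩ heq
      simp only at heq
      obtain ⟨h1, h2⟩ := inv_p y₁ hy1 hy2
      obtain ⟨h3, h4⟩ := inv_p y₂ hz1 hz2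
      calc y₁ = t * (s * y₁ * s) * t := (conj_back y₁ h1 h2).symm
        _ = t * (s * y₂ * s) * t := by rw [heq]
        _ = y₂ := conj_back y₂ h3 h4
    · -- SurjOn
      rintro z ⟨hz1, hz2⟩
      obtain ⟨h1, h2⟩ := inv_x z hz1 hz2
      refine ⟨t * z * t, ⟨conj_psd_t z hz1, ?_⟩, ?_⟩
      · have e : t * (x - z) * t = p - t * z * t := by
          rw [mul_sub, sub_mul, htxt]
        have := conj_psd_t _ hz2
        rwa [e] at this
      · show s * (t * z * t) * s = z
        calc s * (t * z * t) * s = (s * t) * z * (t * s) := by simp only [mul_assoc]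
          _ = p * z * p := by rw [hp0, hts]
          _ = z := by rw [h1, h2]
  · rintro y ⟨hy1, hy2⟩ z ⟨hz1, hz2⟩
    obtain ⟨h1, h2⟩ := inv_p y hy1 hy2
    obtain ⟨h3, h4⟩ := inv_p z hz1 hz2
    constructor
    · intro h
      have := conj_psd _ h
      have e : s * (z - y) * s = s * z * s - s * y * s := by
        rw [mul_sub, sub_mul]
      rwa [e] at this
    · intro h
      have h5 : p * (z - y) = z - y := by rw [mul_sub, h1, h3]
      have h6 : (z - y) * p = z - y := by rw [sub_mul, h2, h4]
      have := conj_psd_t _ h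
      have e : t * (s * z * s - s * y * s) * t = z - y := by
        have e2 : s * z * s - s * y * s = s * (z - y) * s := by
          rw [mul_sub, sub_mul]
        rw [e2, conj_back _ h5 h6]
      rwa [e] at this
end

section
/- Let p, q be orthogonal projections in M_n(ℂ) and let r be the orthogonal projection onto (range p) ∩ (range q). If x ∈ M_n(ℂ) satisfies 0 ≤ x ≤ p and 0 ≤ x ≤ q, then x ≤ r. In particular, r is the greatest lower bound of p and q within the set {y : 0 ≤ y ≤ 1}. -/
open Matrix
open scoped ComplexOrder

/-!
If `0 ≤ x ≤ e` for a projection `e`, then `e x = x` (a C*-algebra fact). Hence `p x = x = q x`,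
so the range of `x` lies in `range p ∩ range q = range r`, i.e. `r x = x`. As `x ≤ p ≤ 1`,
this gives `x = r x r ≤ r 1 r = r`. The same range argument applied to `r` gives `p r = r = q r`,
i.e. `r ≤ p` and `r ≤ q`.
-/

theorem IsStarProjection.le_of_mul_eq_of_le_one {R : Type*} [Ring R] [PartialOrder R] [StarRing R]
    [StarOrderedRing R] {e x : R} (he : IsStarProjection e) (hx : IsSelfAdjoint x)
    (hx1 : x ≤ 1) (hex : e * x = x) : x ≤ e := by
  have hxe : x * e = x := by
    simpa [hx.star_eq, he.isSelfAdjoint.star_eq] using congr(star $hex)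
  calc x = e * x * e := by rw [hex, hxe]
    _ ≤ e * 1 * e := he.isSelfAdjoint.conjugate_le_conjugate hx1
    _ = e := by rw [mul_one, he.isIdempotentElem.eq]

namespace Matrix

variable {m n R : Type*} [Fintype m] [Fintype n] [CommRing R]

theorem mul_eq_self_iff_range_mulVecLin_le {e : Matrix m m R} (he : IsIdempotentElem e)
    {A : Matrix m n R} :
    e * A = A ↔ LinearMap.range A.mulVecLin ≤ LinearMap.range e.mulVecLin := by
  have he' : IsIdempotentElem e.mulVecLin := by
    rw [IsIdempotentElem, Module.End.mul_eq_comp, ← mulVecLin_mul, he.eq]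
  constructor
  · intro h
    rw [← h, mulVecLin_mul]
    exact LinearMap.range_comp_le_range _ _
  · intro h
    refine ext_iff_mulVec.mpr fun v ↦ ?_
    rw [← mulVec_mulVec]
    exact (LinearMap.IsIdempotentElem.mem_range_iff he').mp (h ⟨v, rfl⟩)

theorem mul_eq_self_iff_of_range_mulVecLin_eq_inf {e f g : Matrix m m R}
    (he : IsIdempotentElem e) (hf : IsIdempotentElem f) (hg : IsIdempotentElem g)
    (hrange : LinearMap.range g.mulVecLin =
      LinearMap.range e.mulVecLin ⊓ LinearMap.range f.mulVecLin) {A : Matrix m n R} :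
    g * A = A ↔ e * A = A ∧ f * A = A := by
  simp only [mul_eq_self_iff_range_mulVecLin_le, he, hf, hg, hrange, le_inf_iff]

end Matrix

open scoped MatrixOrder Matrix.Norms.L2Operator in
/-- If `p, q` are orthogonal projections and `r` is the orthogonal
projection onto `range p ∩ range q`, then any `x` with `0 ≤ x ≤ p` and `0 ≤ x ≤ q`
satisfies `x ≤ r`; in particular `r` is the greatest lower bound of `p` and `q`
within `{y : 0 ≤ y ≤ 1}` (Loewner order). -/
theorem stmt_9 (n : ℕ) (p q r : Matrix (Fin n) (Fin n) ℂ)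
    (hp : p.IsHermitian) (hp2 : p * p = p)
    (hq : q.IsHermitian) (hq2 : q * q = q)
    (hr : r.IsHermitian) (hr2 : r * r = r)
    (hrange : LinearMap.range r.mulVecLin =
      LinearMap.range p.mulVecLin ⊓ LinearMap.range q.mulVecLin) :
    (∀ x : Matrix (Fin n) (Fin n) ℂ,
      x.PosSemidef → (p - x).PosSemidef → (q - x).PosSemidef → (r - x).PosSemidef) ∧
    ((p - r).PosSemidef ∧ (q - r).PosSemidef ∧ r.PosSemidef ∧ (1 - r).PosSemidef) := by
  have hP : IsStarProjection p := ⟨hp2, hp⟩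
  have hQ : IsStarProjection q := ⟨hq2, hq⟩
  have hR : IsStarProjection r := ⟨hr2, hr⟩
  have absorb (A : Matrix (Fin n) (Fin n) ℂ) :=
    mul_eq_self_iff_of_range_mulVecLin_eq_inf hp2 hq2 hr2 hrange (A := A)
  obtain ⟨hpr, hqr⟩ := (absorb r).mp hr2
  simp only [← nonneg_iff_posSemidef, sub_nonneg]
  refine ⟨fun x hx hxp hxq ↦ ?_, hR.le_of_mul_eq_right hP hpr, hR.le_of_mul_eq_right hQ hqr,
    hR.nonneg, hR.le_one⟩
  refine hR.le_of_mul_eq_of_le_one hx.isSelfAdjoint (hxp.trans hP.le_one)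
    ((absorb x).mpr ⟨?_, ?_⟩)
  · exact (hP.mul_right_and_mul_left_of_nonneg_of_le hx hxp).2
  · exact (hQ.mul_right_and_mul_left_of_nonneg_of_le hx hxq).2
end

section
/- Let S be a set and consider ℓ∞(S, ℝ) with the pointwise order. For a function z ∈ ℓ∞(S, ℝ) with 0 ≤ z ≤ 1 and z ≠ 0, the order interval [0, z] = {x : 0 ≤ x ≤ z} is totally ordered if and only if z is a positive multiple of the indicator function of a singleton {s} for some s ∈ S. -/
/-!
Every element of `[0, z]` vanishes off the support of `z`, so two such elements can only
disagree on the support; if it has at most one point they are comparable. Conversely, for two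
points `s ≠ t` of the support, the restrictions of `z` to `{s}` and to `{t}` lie in `[0, z]` and
are incomparable.
-/

open Function Set

theorem le_total_of_subsingleton_setOf_ne {ι α : Type*} [LinearOrder α] {x y : ι → α}
    (h : {i | x i ≠ y i}.Subsingleton) : x ≤ y ∨ y ≤ x := by
  by_contra! hxy
  simp only [Pi.le_def, not_forall, not_le] at hxy
  obtain ⟨⟨i, hi⟩, j, hj⟩ := hxy
  obtain rfl : i = j := h hi.ne' hj.ne
  exact lt_asymm hi hj

theorem setOf_ne_subset_support_of_mem_Icc {ι α : Type*} [PartialOrder α] [Zero α]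
    {x y z : ι → α} (hx : x ∈ Icc 0 z) (hy : y ∈ Icc 0 z) : {i | x i ≠ y i} ⊆ support z := by
  intro i hxy hzi
  have hxi : x i = 0 := ((hx.2 i).trans_eq hzi).antisymm (hx.1 i)
  have hyi : y i = 0 := ((hy.2 i).trans_eq hzi).antisymm (hy.1 i)
  exact hxy (hxi.trans hyi.symm)

theorem isChain_Icc_zero_iff_support_subsingleton {ι α : Type*} [LinearOrder α] [Zero α]
    {z : ι → α} (h0 : 0 ≤ z) : IsChain (· ≤ ·) (Icc 0 z) ↔ (support z).Subsingleton := by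
  refine ⟨fun hchain s hs t ht => ?_, fun hsub x hx y hy _ =>
    le_total_of_subsingleton_setOf_ne (hsub.anti (setOf_ne_subset_support_of_mem_Icc hx hy))⟩
  by_contra hst
  have hmem (u : ι) : indicator {u} z ∈ Icc 0 z :=
    ⟨indicator_nonneg fun i _ => h0 i, indicator_le_self' fun i _ => h0 i⟩
  have hpos (u : ι) (hu : u ∈ support z) : ¬ z u ≤ 0 := fun h => hu (h.antisymm (h0 u))
  rcases hchain (hmem s) (hmem t) fun h => hs (by simpa [hst] using congrFun h s) with h | h
  · exact hpos s hs (by simpa [hst] using h s)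
  · exact hpos t ht (by simpa [Ne.symm hst] using h t)

theorem eq_smul_indicator_singleton_of_support_subset {ι R : Type*} [MulZeroOneClass R]
    {z : ι → R} {s : ι} (h : support z ⊆ {s}) :
    z = z s • indicator {s} (fun _ => (1 : R)) := by
  ext t
  by_cases hts : t = s
  · simp [hts]
  · simp [hts, notMem_support.1 fun ht => hts (h ht)]

theorem stmt_12_general {S : Type*} (z : S → ℝ)
    (h0 : 0 ≤ z) (hz : z ≠ 0) :
    IsChain (· ≤ ·) {x : S → ℝ | 0 ≤ x ∧ x ≤ z} ↔
      ∃ (s : S) (c : ℝ), 0 < c ∧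
        z = c • Set.indicator ({s} : Set S) (fun _ => (1 : ℝ)) := by
  refine (isChain_Icc_zero_iff_support_subsingleton h0).trans ⟨fun hsub => ?_, ?_⟩
  · obtain ⟨s, hs⟩ := support_nonempty_iff.2 hz
    exact ⟨s, z s, (h0 s).lt_of_ne' hs,
      eq_smul_indicator_singleton_of_support_subset (hsub.eq_singleton_of_mem hs).subset⟩
  · rintro ⟨s, c, -, rfl⟩
    exact subsingleton_singleton.anti
      ((support_const_smul_subset _ _).trans support_indicator_subset)

/-- In `ℓ∞(S, ℝ)` with the pointwise order, for `0 ≤ z ≤ 1`, `z ≠ 0`,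
the order interval `[0, z]` is totally ordered iff `z` is a positive multiple of the
indicator function of a singleton. -/
theorem stmt_12 {S : Type*} (z : S → ℝ)
    (h0 : 0 ≤ z) (h1 : z ≤ 1) (hz : z ≠ 0) :
    IsChain (· ≤ ·) {x : S → ℝ | 0 ≤ x ∧ x ≤ z} ↔
      ∃ (s : S) (c : ℝ), 0 < c ∧
        z = c • Set.indicator ({s} : Set S) (fun _ => (1 : ℝ)) :=
  stmt_12_general z h0 hz
end

section
/- Let S and T be finite sets and let f : [0,1]^S → [0,1]^T be an order isomorphism with respect to the product order. Then |S| = |T|, and there exist a bijection σ : S → T and order isomorphisms f_s : [0,1] → [0,1] for each s ∈ S such that f(x)_{σ(s)} = f_s(x_s) for all x ∈ [0,1]^S and s ∈ S. -/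
namespace Stmt14

open Set

noncomputable section

open scoped Classical

instance : Fact ((0:ℝ) ≤ 1) := ⟨zero_le_one⟩

abbrev II : Type := ↥(Set.Icc (0:ℝ) 1)

variable {ι κ : Type*}

/-- the axis point with value `a` at coordinate `s` and `⊥` elsewhere. -/
def ax (s : ι) (a : II) : ι → II := fun t => if t = s then a else ⊥

lemma ax_self (s : ι) (a : II) : ax s a s = a := if_pos rfl

lemma ax_ne {s t : ι} (a : II) (h : t ≠ s) : ax s a t = ⊥ := if_neg h

lemma ax_bot (s : ι) : ax (ι := ι) s ⊥ = ⊥ := by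
  funext t; by_cases h : t = s
  · simp [ax, h]
  · simp [ax, h]

lemma ax_mono (s : ι) {a b : II} (h : a ≤ b) : ax s a ≤ ax s b := by
  intro t; by_cases ht : t = s
  · subst ht; rw [ax_self, ax_self]; exact h
  · rw [ax_ne a ht, ax_ne b ht]

lemma ax_le {s : ι} {a : II} {x : ι → II} (h : a ≤ x s) : ax s a ≤ x := by
  intro t; by_cases ht : t = s
  · subst ht; rw [ax_self]; exact h
  · rw [ax_ne a ht]; exact bot_le

lemma bot_ne_top_II : (⊥ : II) ≠ ⊤ := by
  intro h
  have h1 : (⟨1, by norm_num⟩ : II) ≤ ⟨0, by norm_num⟩ :=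
    le_trans le_top (le_trans h.ge bot_le)
  exact absurd (Subtype.mk_le_mk.mp h1) (by norm_num)

lemma ax_top_ne_bot (s : ι) : ax s ⊤ ≠ (⊥ : ι → II) := by
  intro h
  have h2 := congrFun h s
  rw [ax_self, Pi.bot_apply] at h2
  exact bot_ne_top_II h2.symm

/-- `x` has at most one nonbot coordinate. -/
def Axis (x : ι → II) : Prop := ∀ s t, x s ≠ ⊥ → x t ≠ ⊥ → s = t

lemma axis_ax (s : ι) (a : II) : Axis (ax s a) := by
  intro u v hu hv
  by_cases hus : u = s
  · by_cases hvs : v = s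
    · rw [hus, hvs]
    · exact absurd (ax_ne a hvs) hv
  · exact absurd (ax_ne a hus) hu

/-- Order-theoretic characterization of `Axis`. -/
def AxisC (x : ι → II) : Prop := ∀ y z, y ≤ x → z ≤ x → (y ≤ z ∨ z ≤ y)

lemma axis_iff_axisC (x : ι → II) : Axis x ↔ AxisC x := by
  constructor
  · intro hx y z hy hz
    by_cases hb : ∀ s, x s = ⊥
    · left; intro t
      have h1 : y t ≤ ⊥ := (hy t).trans (hb t).le
      exact h1.trans bot_le
    · push_neg at hb
      obtain ⟨s0, hs0⟩ := hb
      have hcoord : ∀ t, t ≠ s0 → x t = ⊥ := by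
        intro t ht
        by_contra h
        exact ht (hx t s0 h hs0)
      rcases le_total (y s0) (z s0) with h | h
      · left; intro t
        by_cases ht : t = s0
        · subst ht; exact h
        · exact le_trans ((hy t).trans (hcoord t ht).le) bot_le
      · right; intro t
        by_cases ht : t = s0
        · subst ht; exact h
        · exact le_trans ((hz t).trans (hcoord t ht).le) bot_le
  · intro hc s t hs ht
    by_contra hst
    have hy : ax s (x s) ≤ x := ax_le le_rfl
    have hz : ax t (x t) ≤ x := ax_le le_rfl
    rcases hc _ _ hy hz with h | h
    · have := h s
      rw [ax_self, ax_ne _ hst] at this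
      exact hs (le_bot_iff.mp this)
    · have := h t
      rw [ax_self, ax_ne _ (fun hts => hst hts.symm)] at this
      exact ht (le_bot_iff.mp this)

lemma axisC_map (e : (ι → II) ≃o (κ → II)) {x : ι → II} (hx : AxisC x) : AxisC (e x) := by
  intro y z hy hz
  have hy' : e.symm y ≤ x := by
    have := e.symm.monotone hy
    rwa [e.symm_apply_apply] at this
  have hz' : e.symm z ≤ x := by
    have := e.symm.monotone hz
    rwa [e.symm_apply_apply] at this
  rcases hx _ _ hy' hz' with h | h
  · left
    have := e.monotone h
    rwa [e.apply_symm_apply, e.apply_symm_apply] at this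
  · right
    have := e.monotone h
    rwa [e.apply_symm_apply, e.apply_symm_apply] at this

lemma axis_map (e : (ι → II) ≃o (κ → II)) {x : ι → II} (hx : Axis x) : Axis (e x) :=
  (axis_iff_axisC _).mpr (axisC_map e ((axis_iff_axisC _).mp hx))

lemma exists_ne_bot {x : ι → II} (hx : x ≠ ⊥) : ∃ s, x s ≠ ⊥ := by
  by_contra h
  push_neg at h
  exact hx (funext h)

/-- Key structural lemma: `e` maps each axis into a single axis. -/
lemma exists_tau (e : (ι → II) ≃o (κ → II)) :
    ∃ τ : ι → κ, ∀ s a, e (ax s a) = ax (τ s) (e (ax s a) (τ s)) := by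
  have hne : ∀ s : ι, e (ax s ⊤) ≠ ⊥ := by
    intro s h
    rw [← e.map_bot] at h
    exact ax_top_ne_bot s (e.injective h)
  choose τ hτ using fun s => exists_ne_bot (hne s)
  refine ⟨τ, fun s a => ?_⟩
  have hz : Axis (e (ax s ⊤)) := axis_map e (axis_ax s ⊤)
  have hzero : ∀ t, t ≠ τ s → e (ax s ⊤) t = ⊥ := by
    intro t ht
    by_contra h
    exact ht (hz t (τ s) h (hτ s))
  have hle : e (ax s a) ≤ e (ax s ⊤) := e.monotone (ax_mono s le_top)
  funext t
  by_cases ht : t = τ s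
  · subst ht; rw [ax_self]
  · rw [ax_ne _ ht]
    exact le_bot_iff.mp ((hle t).trans (hzero t ht).le)

lemma tau_inv (e : (ι → II) ≃o (κ → II)) (τ : ι → κ) (τ' : κ → ι)
    (hτ : ∀ s a, e (ax s a) = ax (τ s) (e (ax s a) (τ s)))
    (hτ' : ∀ t a, e.symm (ax t a) = ax (τ' t) (e.symm (ax t a) (τ' t))) :
    ∀ s, τ' (τ s) = s := by
  intro s
  set c := e (ax s ⊤) (τ s) with hc
  have h1 : e (ax s ⊤) = ax (τ s) c := hτ s ⊤
  have h2 : e.symm (ax (τ s) c) = ax s ⊤ := by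
    rw [← h1, e.symm_apply_apply]
  have h3 := hτ' (τ s) c
  rw [h2] at h3
  by_contra hne
  have := congrFun h3 s
  rw [ax_self, ax_ne _ (fun h => hne h.symm)] at this
  exact bot_ne_top_II this.symm

theorem key [Fintype ι] (e : (ι → II) ≃o (κ → II)) :
    ∃ (σ : ι ≃ κ) (G : ι → II → II),
      (∀ s, Function.Bijective (G s)) ∧
      (∀ s (a b : II), a ≤ b ↔ G s a ≤ G s b) ∧
      (∀ x s, e x (σ s) = G s (x s)) := by
  obtain ⟨τ, hτ⟩ := exists_tau e
  obtain ⟨τ', hτ'⟩ := exists_tau e.symm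
  have hτ'' : ∀ t a, e (ax t a) = ax (τ t) (e (ax t a) (τ t)) := by
    intro t a
    have := hτ t a
    exact this
  have hsymm : ∀ s a, e.symm.symm (ax s a) = ax (τ s) (e.symm.symm (ax s a) (τ s)) := by
    intro s a; rw [OrderIso.symm_symm]; exact hτ s a
  have hleft : ∀ s, τ' (τ s) = s := tau_inv e τ τ' hτ hτ'
  have hright : ∀ t, τ (τ' t) = t := tau_inv e.symm τ' τ hτ' hsymm
  set σ : ι ≃ κ := ⟨τ, τ', hleft, hright⟩ with hσ
  set G : ι → II → II := fun s a => e (ax s a) (τ s) with hGdef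
  have hG : ∀ s a, e (ax s a) = ax (τ s) (G s a) := fun s a => hτ s a
  have hord : ∀ s (a b : II), a ≤ b ↔ G s a ≤ G s b := by
    intro s a b
    constructor
    · intro h
      exact e.monotone (ax_mono s h) (τ s)
    · intro h
      have h1 : ax (τ s) (G s a) ≤ ax (τ s) (G s b) := ax_mono _ h
      rw [← hG, ← hG] at h1
      have h2 : ax s a ≤ ax s b := e.le_iff_le.mp h1
      have := h2 s
      rwa [ax_self, ax_self] at this
  have hinj : ∀ s, Function.Injective (G s) := by
    intro s a b h
    exact le_antisymm ((hord s a b).mpr h.le) ((hord s b a).mpr h.ge)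
  have hsurj : ∀ s, Function.Surjective (G s) := by
    intro s b
    have h1 := hτ' (τ s) b
    rw [hleft s] at h1
    refine ⟨e.symm (ax (τ s) b) s, ?_⟩
    have h2 : e (ax s (e.symm (ax (τ s) b) s)) = ax (τ s) b := by
      conv_lhs => rw [← h1]
      exact e.apply_symm_apply _
    rw [hGdef]
    simp only
    rw [h2, ax_self]
  -- decomposition of x as a finite sup of axis points
  have hdecomp : ∀ x : ι → II, Finset.univ.sup (fun s => ax s (x s)) = x := by
    intro x
    funext t
    rw [Finset.sup_apply]
    apply le_antisymm
    · apply Finset.sup_le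
      intro s _
      by_cases h : t = s
      · subst h; rw [ax_self]
      · rw [ax_ne _ h]; exact bot_le
    · have := Finset.le_sup (f := fun s => ax s (x s) t) (Finset.mem_univ t)
      simpa only [ax_self] using this
  have hmapsup : ∀ (u : Finset ι) (F : ι → (ι → II)),
      e (u.sup F) = u.sup (fun i => e (F i)) := by
    intro u F
    induction u using Finset.induction_on with
    | empty => simp [e.map_bot]
    | insert _ _ h ih => rw [Finset.sup_insert, Finset.sup_insert, e.map_sup, ih]
  refine ⟨σ, G, fun s => ⟨hinj s, hsurj s⟩, hord, ?_⟩
  intro x s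
  have hτinj : Function.Injective τ := fun a b h => by
    have := congrArg τ' h; rwa [hleft, hleft] at this
  conv_lhs => rw [← hdecomp x, hmapsup]
  have : (Finset.univ.sup fun i => e (ax i (x i))) =
      Finset.univ.sup fun i => ax (τ i) (G i (x i)) := by
    congr 1
    funext i
    exact hG i (x i)
  rw [this]
  show (Finset.univ.sup fun i => ax (τ i) (G i (x i))) (τ s) = G s (x s)
  rw [Finset.sup_apply]
  apply le_antisymm
  · apply Finset.sup_le
    intro i _
    by_cases h : τ s = τ i
    · have : i = s := hτinj h.symm
      subst this
      rw [ax_self]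
    · rw [ax_ne _ h]; exact bot_le
  · have := Finset.le_sup (f := fun i => ax (τ i) (G i (x i)) (τ s)) (Finset.mem_univ s)
    simpa only [ax_self] using this

end

end Stmt14

open Stmt14 in
/-- Any order isomorphism `f : [0,1]^S → [0,1]^T` (product order, `S`, `T`
finite) forces `|S| = |T|`, and `f` is given by a bijection `σ : S → T` together with
order isomorphisms `f_s` of `[0,1]`, via `f(x)_{σ(s)} = f_s(x_s)`. -/
theorem stmt_14 {S T : Type*} [Fintype S] [Fintype T]
    (f : (S → ℝ) → (T → ℝ))
    (hbij : Set.BijOn f {x : S → ℝ | ∀ s, x s ∈ Set.Icc (0 : ℝ) 1}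
      {y : T → ℝ | ∀ t, y t ∈ Set.Icc (0 : ℝ) 1})
    (hord : ∀ x ∈ {x : S → ℝ | ∀ s, x s ∈ Set.Icc (0 : ℝ) 1},
      ∀ y ∈ {x : S → ℝ | ∀ s, x s ∈ Set.Icc (0 : ℝ) 1}, (x ≤ y ↔ f x ≤ f y)) :
    Fintype.card S = Fintype.card T ∧
    ∃ (σ : S ≃ T) (g : S → ℝ → ℝ),
      (∀ s, Set.BijOn (g s) (Set.Icc (0 : ℝ) 1) (Set.Icc (0 : ℝ) 1) ∧
        ∀ a ∈ Set.Icc (0 : ℝ) 1, ∀ b ∈ Set.Icc (0 : ℝ) 1, (a ≤ b ↔ g s a ≤ g s b)) ∧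
      ∀ x ∈ {x : S → ℝ | ∀ s, x s ∈ Set.Icc (0 : ℝ) 1}, ∀ s, f x (σ s) = g s (x s) := by
  classical
  set A : Set (S → ℝ) := {x : S → ℝ | ∀ s, x s ∈ Set.Icc (0 : ℝ) 1} with hA
  set B : Set (T → ℝ) := {y : T → ℝ | ∀ t, y t ∈ Set.Icc (0 : ℝ) 1} with hB
  -- the map on pi types of subtypes
  have hmem : ∀ p : S → II, (fun s => (p s : ℝ)) ∈ A := fun p s => (p s).2
  set F : (S → II) → (T → II) :=
    fun p t => ⟨f (fun s => (p s : ℝ)) t, hbij.mapsTo (hmem p) t⟩ with hF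
  have hFbij : Function.Bijective F := by
    constructor
    · intro p q h
      have h1 : f (fun s => (p s : ℝ)) = f (fun s => (q s : ℝ)) := by
        funext t
        exact congrArg Subtype.val (congrFun h t)
      have h2 := hbij.injOn (hmem p) (hmem q) h1
      funext s
      exact Subtype.ext (congrFun h2 s)
    · intro q
      obtain ⟨x, hx, hfx⟩ := hbij.surjOn (fun t => (q t).2 : (fun t => ((q t : ℝ))) ∈ B)
      refine ⟨fun s => ⟨x s, hx s⟩, ?_⟩
      funext t
      exact Subtype.ext (congrFun hfx t)
  set e0 : (S → II) ≃ (T → II) := Equiv.ofBijective F hFbij with he0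
  have he0app : ∀ p, e0 p = F p := fun p => rfl
  have hrel : ∀ p q : S → II, e0 p ≤ e0 q ↔ p ≤ q := by
    intro p q
    rw [he0app, he0app]
    constructor
    · intro h s
      have h1 : f (fun s => (p s : ℝ)) ≤ f (fun s => (q s : ℝ)) := fun t => h t
      have h2 := (hord _ (hmem p) _ (hmem q)).mpr h1
      exact h2 s
    · intro h t
      have h1 : (fun s => (p s : ℝ)) ≤ (fun s => (q s : ℝ)) := fun s => h s
      exact (hord _ (hmem p) _ (hmem q)).mp h1 t
  set e : (S → II) ≃o (T → II) := ⟨e0, by intro p q; exact hrel p q⟩ with he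
  obtain ⟨σ, G, hGbij, hGord, hGe⟩ := key e
  refine ⟨Fintype.card_congr σ, σ, fun s a => if h : a ∈ Set.Icc (0:ℝ) 1 then ((G s ⟨a, h⟩ : II) : ℝ) else a, fun s => ⟨⟨?_, ?_, ?_⟩, ?_⟩, ?_⟩
  · -- MapsTo
    intro a ha
    simp only [dif_pos ha]
    exact (G s ⟨a, ha⟩).2
  · -- InjOn
    intro a ha b hb hab
    simp only [dif_pos ha, dif_pos hb] at hab
    have := (hGbij s).1 (Subtype.ext hab)
    exact congrArg Subtype.val this
  · -- SurjOn
    intro b hb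
    obtain ⟨a, hab⟩ := (hGbij s).2 ⟨b, hb⟩
    refine ⟨(a : ℝ), a.2, ?_⟩
    simp only [dif_pos a.2]
    rw [Subtype.coe_eta, hab]
  · -- order iff
    intro a ha b hb
    simp only [dif_pos ha, dif_pos hb]
    constructor
    · intro h
      exact (hGord s ⟨a, ha⟩ ⟨b, hb⟩).mp (Subtype.mk_le_mk.mpr h)
    · intro h
      exact Subtype.mk_le_mk.mp ((hGord s ⟨a, ha⟩ ⟨b, hb⟩).mpr h)
  · -- identity
    intro x hx s
    have hx' : x ∈ A := hx
    set p : S → II := fun s => ⟨x s, hx' s⟩ with hp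
    have h1 := hGe p s
    have h2 : e p (σ s) = ⟨f x (σ s), hbij.mapsTo hx' (σ s)⟩ := by
      show F p (σ s) = _
      simp only [hF]
      rfl
    have h3 : (⟨f x (σ s), hbij.mapsTo hx' (σ s)⟩ : II) = G s ⟨x s, hx' s⟩ := by
      rw [← h2]; exact h1
    have h4 := congrArg Subtype.val h3
    simp only at h4
    show f x (σ s) = if h : x s ∈ Set.Icc (0:ℝ) 1 then ((G s ⟨x s, h⟩ : II) : ℝ) else x s
    rw [dif_pos (hx' s)]
    exact h4
end

section
/- Fix y ∈ M_n(ℂ) positive definite, and define f : {x ∈ M_n(ℂ) : 0 < x ≤ 1, x invertible positive definite} → M_n(ℂ) by f(x) = (y·x⁻¹·y - y² + 1)⁻¹. Then f is well-defined (the element y·x⁻¹·y - y² + 1 is positive definite), f(x) satisfies 0 < f(x) ≤ 1, and f is an order isomorphism onto {z : z positive definite and z ≤ 1}: x ≤ x' if and only if f(x) ≤ f(x'). -/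
open Matrix
open scoped ComplexOrder

variable {n : ℕ}

namespace Helper

open scoped MatrixOrder in
noncomputable def msqrt {x : Matrix (Fin n) (Fin n) ℂ} (hx : x.PosDef) :
    Matrix (Fin n) (Fin n) ℂ := CFC.sqrt x

open scoped MatrixOrder in
lemma msqrt_mul_self {x : Matrix (Fin n) (Fin n) ℂ} (hx : x.PosDef) :
    msqrt hx * msqrt hx = x :=
  CFC.sqrt_mul_sqrt_self x (Matrix.nonneg_iff_posSemidef.mpr hx.posSemidef)

lemma msqrt_isUnit_det {x : Matrix (Fin n) (Fin n) ℂ} (hx : x.PosDef) :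
    IsUnit (msqrt hx).det := by
  have h := congrArg Matrix.det (msqrt_mul_self hx)
  rw [Matrix.det_mul] at h
  have := hx.isUnit
  rw [Matrix.isUnit_iff_isUnit_det] at this
  rw [isUnit_iff_ne_zero] at this ⊢
  intro h0
  apply this
  rw [← h, h0, mul_zero]

open scoped MatrixOrder in
lemma msqrt_herm {x : Matrix (Fin n) (Fin n) ℂ} (hx : x.PosDef) :
    (msqrt hx)ᴴ = msqrt hx :=
  (Matrix.nonneg_iff_posSemidef.mp (CFC.sqrt_nonneg x)).isHermitian

end Helper

namespace Helper

lemma posDef_conj {B M : Matrix (Fin n) (Fin n) ℂ} (hB : B.PosDef) (hM : IsUnit M.det) :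
    (Mᴴ * B * M).PosDef := by
  exact hB.conjTranspose_mul_mul_same
    (Matrix.mulVec_injective_iff_isUnit.mpr ((Matrix.isUnit_iff_isUnit_det M).mpr hM))

/-- x PosDef, 1 - x PSD ⟹ x⁻¹ - 1 PSD -/
lemma inv_sub_one_psd {x : Matrix (Fin n) (Fin n) ℂ} (hx : x.PosDef)
    (h : (1 - x).PosSemidef) : (x⁻¹ - 1).PosSemidef := by
  set s := msqrt hx with hs
  have hdet : IsUnit s.det := msqrt_isUnit_det hx
  have hss : s * s = x := msqrt_mul_self hx
  have hherm : sᴴ = s := msqrt_herm hx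
  have key := h.conjTranspose_mul_mul_same s⁻¹
  rw [Matrix.conjTranspose_nonsing_inv, hherm] at key
  have heq : s⁻¹ * (1 - x) * s⁻¹ = x⁻¹ - 1 := by
    have h1 : s⁻¹ * s⁻¹ = x⁻¹ := by rw [← Matrix.mul_inv_rev, hss]
    have h2 : s⁻¹ * x * s⁻¹ = 1 := by
      calc s⁻¹ * x * s⁻¹ = s⁻¹ * s * (s * s⁻¹) := by rw [← hss]; noncomm_ring
        _ = 1 := by rw [Matrix.nonsing_inv_mul s hdet, Matrix.mul_nonsing_inv s hdet, one_mul]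
    rw [Matrix.mul_sub, Matrix.sub_mul, Matrix.mul_one, h1, h2]
  rwa [heq] at key

/-- x PosDef, x - 1 PSD ⟹ 1 - x⁻¹ PSD -/
lemma one_sub_inv_psd {x : Matrix (Fin n) (Fin n) ℂ} (hx : x.PosDef)
    (h : (x - 1).PosSemidef) : (1 - x⁻¹).PosSemidef := by
  set s := msqrt hx with hs
  have hdet : IsUnit s.det := msqrt_isUnit_det hx
  have hss : s * s = x := msqrt_mul_self hx
  have hherm : sᴴ = s := msqrt_herm hx
  have key := h.conjTranspose_mul_mul_same s⁻¹
  rw [Matrix.conjTranspose_nonsing_inv, hherm] at key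
  have heq : s⁻¹ * (x - 1) * s⁻¹ = 1 - x⁻¹ := by
    have h1 : s⁻¹ * s⁻¹ = x⁻¹ := by rw [← Matrix.mul_inv_rev, hss]
    have h2 : s⁻¹ * x * s⁻¹ = 1 := by
      calc s⁻¹ * x * s⁻¹ = s⁻¹ * s * (s * s⁻¹) := by rw [← hss]; noncomm_ring
        _ = 1 := by rw [Matrix.nonsing_inv_mul s hdet, Matrix.mul_nonsing_inv s hdet, one_mul]
    rw [Matrix.mul_sub, Matrix.sub_mul, Matrix.mul_one, h1, h2]
  rwa [heq] at key

/-- inverse is antitone on PosDef matrices -/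
lemma inv_antitone {a b : Matrix (Fin n) (Fin n) ℂ} (ha : a.PosDef) (hb : b.PosDef)
    (h : (b - a).PosSemidef) : (a⁻¹ - b⁻¹).PosSemidef := by
  set s := msqrt ha with hs
  have hdet : IsUnit s.det := msqrt_isUnit_det ha
  have hss : s * s = a := msqrt_mul_self ha
  have hherm : sᴴ = s := msqrt_herm ha
  have hdetinv : IsUnit (s⁻¹).det := (Matrix.isUnit_nonsing_inv_det s hdet)
  have hinvherm : (s⁻¹)ᴴ = s⁻¹ := by rw [Matrix.conjTranspose_nonsing_inv, hherm]
  have hc : (s⁻¹ * b * s⁻¹).PosDef := by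
    have := posDef_conj hb hdetinv
    rwa [hinvherm] at this
  have h2 : s⁻¹ * a * s⁻¹ = 1 := by
    calc s⁻¹ * a * s⁻¹ = s⁻¹ * s * (s * s⁻¹) := by rw [← hss]; noncomm_ring
      _ = 1 := by rw [Matrix.nonsing_inv_mul s hdet, Matrix.mul_nonsing_inv s hdet, one_mul]
  have hc1 : (s⁻¹ * b * s⁻¹ - 1).PosSemidef := by
    have key := h.conjTranspose_mul_mul_same s⁻¹
    rw [hinvherm] at key
    have heq : s⁻¹ * (b - a) * s⁻¹ = s⁻¹ * b * s⁻¹ - 1 := by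
      rw [Matrix.mul_sub, Matrix.sub_mul, h2]
    rwa [heq] at key
  have key2 := one_sub_inv_psd hc hc1
  have hcinv : (s⁻¹ * b * s⁻¹)⁻¹ = s * b⁻¹ * s := by
    rw [Matrix.mul_inv_rev, Matrix.mul_inv_rev, Matrix.nonsing_inv_nonsing_inv s hdet,
      Matrix.mul_assoc]
  rw [hcinv] at key2
  have key3 := key2.conjTranspose_mul_mul_same s⁻¹
  rw [hinvherm] at key3
  have heq : s⁻¹ * (1 - s * b⁻¹ * s) * s⁻¹ = a⁻¹ - b⁻¹ := by
    have h1 : s⁻¹ * s⁻¹ = a⁻¹ := by rw [← Matrix.mul_inv_rev, hss]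
    have h3 : s⁻¹ * (s * b⁻¹ * s) * s⁻¹ = b⁻¹ := by
      calc s⁻¹ * (s * b⁻¹ * s) * s⁻¹ = s⁻¹ * s * b⁻¹ * (s * s⁻¹) := by noncomm_ring
        _ = b⁻¹ := by
          rw [Matrix.nonsing_inv_mul s hdet, Matrix.mul_nonsing_inv s hdet, one_mul, mul_one]
    rw [Matrix.mul_sub, Matrix.sub_mul, Matrix.mul_one, h1, h3]
  rwa [heq] at key3

end Helper

namespace Helper

lemma g_eq (y x : Matrix (Fin n) (Fin n) ℂ) :
    y * x⁻¹ * y - y ^ 2 + 1 = y * (x⁻¹ - 1) * y + 1 := by noncomm_ring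

lemma g_posDef {y x : Matrix (Fin n) (Fin n) ℂ} (hy : y.PosDef) (hx : x.PosDef)
    (hx1 : (1 - x).PosSemidef) : (y * x⁻¹ * y - y ^ 2 + 1).PosDef := by
  have h1 := inv_sub_one_psd hx hx1
  have h2 := h1.conjTranspose_mul_mul_same y
  rw [hy.isHermitian.eq] at h2
  rw [g_eq]
  exact Matrix.PosDef.posSemidef_add h2 Matrix.PosDef.one

lemma g_sub_one {y x : Matrix (Fin n) (Fin n) ℂ} (hy : y.PosDef) (hx : x.PosDef)
    (hx1 : (1 - x).PosSemidef) : (y * x⁻¹ * y - y ^ 2 + 1 - 1).PosSemidef := by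
  have h1 := inv_sub_one_psd hx hx1
  have h2 := h1.conjTranspose_mul_mul_same y
  rw [hy.isHermitian.eq] at h2
  rw [g_eq, add_sub_cancel_right]
  exact h2

lemma finv {y x : Matrix (Fin n) (Fin n) ℂ} (hy : y.PosDef) (hx : x.PosDef)
    (hx1 : (1 - x).PosSemidef) :
    (y⁻¹ * ((y * x⁻¹ * y - y ^ 2 + 1)⁻¹)⁻¹ * y⁻¹ - y⁻¹ ^ 2 + 1)⁻¹ = x := by
  have hg := g_posDef hy hx hx1
  have hgdet : IsUnit (y * x⁻¹ * y - y ^ 2 + 1).det :=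
    (Matrix.isUnit_iff_isUnit_det _).mp hg.isUnit
  have hydet : IsUnit y.det := (Matrix.isUnit_iff_isUnit_det _).mp hy.isUnit
  rw [Matrix.nonsing_inv_nonsing_inv _ hgdet]
  have hl : y⁻¹ * y = 1 := Matrix.nonsing_inv_mul y hydet
  have hr : y * y⁻¹ = 1 := Matrix.mul_nonsing_inv y hydet
  have e1 : y⁻¹ * (y * x⁻¹ * y) * y⁻¹ = x⁻¹ := by
    calc y⁻¹ * (y * x⁻¹ * y) * y⁻¹ = y⁻¹ * y * x⁻¹ * (y * y⁻¹) := by noncomm_ring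
      _ = x⁻¹ := by rw [hl, hr, one_mul, mul_one]
  have e2 : y⁻¹ * y ^ 2 * y⁻¹ = 1 := by
    calc y⁻¹ * y ^ 2 * y⁻¹ = y⁻¹ * y * (y * y⁻¹) := by noncomm_ring
      _ = 1 := by rw [hl, hr, one_mul]
  have key : y⁻¹ * (y * x⁻¹ * y - y ^ 2 + 1) * y⁻¹ - y⁻¹ ^ 2 + 1 = x⁻¹ := by
    calc y⁻¹ * (y * x⁻¹ * y - y ^ 2 + 1) * y⁻¹ - y⁻¹ ^ 2 + 1
        = y⁻¹ * (y * x⁻¹ * y) * y⁻¹ - y⁻¹ * y ^ 2 * y⁻¹ + y⁻¹ ^ 2 - y⁻¹ ^ 2 + 1 := by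
          noncomm_ring
      _ = x⁻¹ := by rw [e1, e2]; abel
  rw [key, Matrix.nonsing_inv_nonsing_inv x ((Matrix.isUnit_iff_isUnit_det x).mp hx.isUnit)]

lemma mono {y x x' : Matrix (Fin n) (Fin n) ℂ} (hy : y.PosDef) (hx : x.PosDef)
    (hx1 : (1 - x).PosSemidef) (hx' : x'.PosDef) (hx'1 : (1 - x').PosSemidef)
    (h : (x' - x).PosSemidef) :
    ((y * x'⁻¹ * y - y ^ 2 + 1)⁻¹ - (y * x⁻¹ * y - y ^ 2 + 1)⁻¹).PosSemidef := by
  have h1 := inv_antitone hx hx' h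
  have h2 := h1.conjTranspose_mul_mul_same y
  rw [hy.isHermitian.eq] at h2
  have h3 : (y * x⁻¹ * y - y ^ 2 + 1) - (y * x'⁻¹ * y - y ^ 2 + 1) = y * (x⁻¹ - 1*x'⁻¹) * y := by
    noncomm_ring
  rw [one_mul] at h3
  exact inv_antitone (g_posDef hy hx' hx'1) (g_posDef hy hx hx1) (h3 ▸ h2)

end Helper


open Helper

/-- For fixed positive definite `y`, the map
`f(x) = (y x⁻¹ y - y² + 1)⁻¹` is well defined on
`{x : x positive definite, x ≤ 1}`, takes values in the same set, and is an order
isomorphism of that set onto itself (Loewner order). -/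
theorem stmt_16 (n : ℕ) (y : Matrix (Fin n) (Fin n) ℂ) (hy : y.PosDef) :
    (∀ x ∈ {x : Matrix (Fin n) (Fin n) ℂ | x.PosDef ∧ (1 - x).PosSemidef},
      (y * x⁻¹ * y - y ^ 2 + 1).PosDef) ∧
    Set.BijOn (fun x : Matrix (Fin n) (Fin n) ℂ => (y * x⁻¹ * y - y ^ 2 + 1)⁻¹)
      {x : Matrix (Fin n) (Fin n) ℂ | x.PosDef ∧ (1 - x).PosSemidef}
      {z : Matrix (Fin n) (Fin n) ℂ | z.PosDef ∧ (1 - z).PosSemidef} ∧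
    ∀ x ∈ {x : Matrix (Fin n) (Fin n) ℂ | x.PosDef ∧ (1 - x).PosSemidef},
      ∀ x' ∈ {x : Matrix (Fin n) (Fin n) ℂ | x.PosDef ∧ (1 - x).PosSemidef},
        ((x' - x).PosSemidef ↔
          ((y * x'⁻¹ * y - y ^ 2 + 1)⁻¹ - (y * x⁻¹ * y - y ^ 2 + 1)⁻¹).PosSemidef) := by

  have hydet : IsUnit y.det := (Matrix.isUnit_iff_isUnit_det _).mp hy.isUnit
  have hy' : y⁻¹.PosDef := hy.inv
  have hyy : (y⁻¹)⁻¹ = y := Matrix.nonsing_inv_nonsing_inv y hydet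
  have hmem : ∀ u : Matrix (Fin n) (Fin n) ℂ, ∀ v : Matrix (Fin n) (Fin n) ℂ, v.PosDef →
      ∀ x : Matrix (Fin n) (Fin n) ℂ, x.PosDef → (1 - x).PosSemidef →
      ((v * x⁻¹ * v - v ^ 2 + 1)⁻¹).PosDef ∧ (1 - (v * x⁻¹ * v - v ^ 2 + 1)⁻¹).PosSemidef :=
    fun _ v hv x hx hx1 =>
      ⟨(g_posDef hv hx hx1).inv,
        one_sub_inv_psd (g_posDef hv hx hx1) (g_sub_one hv hx hx1)⟩
  refine ⟨fun x hx => g_posDef hy hx.1 hx.2, ?_, ?_⟩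
  · have hinv : Set.InvOn
        (fun z : Matrix (Fin n) (Fin n) ℂ => (y⁻¹ * z⁻¹ * y⁻¹ - y⁻¹ ^ 2 + 1)⁻¹)
        (fun x : Matrix (Fin n) (Fin n) ℂ => (y * x⁻¹ * y - y ^ 2 + 1)⁻¹)
        {x : Matrix (Fin n) (Fin n) ℂ | x.PosDef ∧ (1 - x).PosSemidef}
        {z : Matrix (Fin n) (Fin n) ℂ | z.PosDef ∧ (1 - z).PosSemidef} := by
      constructor
      · intro x hx
        simpa using finv hy hx.1 hx.2
      · intro z hz
        simpa [hyy] using finv hy' hz.1 hz.2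
    exact hinv.bijOn (fun x hx => hmem 0 y hy x hx.1 hx.2)
      (fun z hz => hmem 0 y⁻¹ hy' z hz.1 hz.2)
  · intro x hx x' hx'
    constructor
    · exact fun h => mono hy hx.1 hx.2 hx'.1 hx'.2 h
    · intro h
      have hfx := hmem 0 y hy x hx.1 hx.2
      have hfx' := hmem 0 y hy x' hx'.1 hx'.2
      have key := mono hy' hfx.1 hfx.2 hfx'.1 hfx'.2 h
      rwa [finv hy hx.1 hx.2, finv hy hx'.1 hx'.2] at key
end
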